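/- Let H be a reduced, commutative, cancellative, atomic monoid. Then c_mon(H) = sup({μ_eq(a) : a ∈ H, A_a(∼_{H,eq}) ≠ ∅, and |R_{a,k}| > 1 for some k ∈ L(a)} ∪ {μ_adj(a) : a ∈ H, A_a(∼_{H,mon}) ≠ ∅}). -/

import Mathlib

namespace CMR

variable {α : Type*} [CancelCommMonoid α]

/-- The factorization monoid `Z(H)`: the free abelian monoid over the set of atoms of `H`,
modeled as multisets of atoms. -/
abbrev Fac (α : Type*) [CancelCommMonoid α] : Type _ := Multiset {u : α // Irreducible u}

/-- The factorization homomorphism `π : Z(H) → H`. -/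
def piF (z : Fac α) : α := (z.map Subtype.val).prod

/-- `Z a`: the set of factorizations of `a`. -/
def Z (a : α) : Set (Fac α) := {z | piF z = a}

/-- `L a`: the set of lengths of `a`. -/
def L (a : α) : Set ℕ := {n | ∃ z ∈ Z a, Multiset.card z = n}

/-- `Zk a k`: the factorizations of `a` of length `k`. -/
def Zk (a : α) (k : ℕ) : Set (Fac α) := {z ∈ Z a | Multiset.card z = k}

/-- `ZM a M`: the factorizations of `a` whose length lies in `M`. -/
def ZM (a : α) (M : Set ℕ) : Set (Fac α) := {z ∈ Z a | Multiset.card z ∈ M}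

/-- The distance between two factorizations:
`d(z,z') = max (|z / gcd(z,z')|, |z' / gcd(z,z')|)`. -/
noncomputable def d (z z' : Fac α) : ℕ :=
  letI := Classical.decEq {u : α // Irreducible u}
  max (Multiset.card (z - z')) (Multiset.card (z' - z))

/-- The distance between two sets of factorizations, the minimum of pairwise
distances (with the convention `sInf ∅ = 0`). -/
noncomputable def dS (X Y : Set (Fac α)) : ℕ :=
  sInf {n : ℕ | ∃ x ∈ X, ∃ y ∈ Y, d x y = n}

/-- `k` and `l` are adjacent lengths of `a` (with `k < l`):
`L(a) ∩ [k, l] = {k, l}`. -/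
def Adjacent (a : α) (k l : ℕ) : Prop :=
  k ∈ L a ∧ l ∈ L a ∧ k < l ∧ ∀ m ∈ L a, k ≤ m → m ≤ l → m = k ∨ m = l

/-- A chain of factorizations of `a` from `z` to `z'` whose consecutive members
satisfy the step predicate `P`. -/
def Chain (a : α) (P : Fac α → Fac α → Prop) (z z' : Fac α) : Prop :=
  ∃ (n : ℕ) (c : Fin (n + 1) → Fac α),
    c 0 = z ∧ c (Fin.last n) = z' ∧ (∀ i, c i ∈ Z a) ∧
    ∀ i : Fin n, P (c i.castSucc) (c i.succ)

/-- The catenary degree of an element: the smallest `N ∈ ℕ∞` such that any two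
factorizations of `a` are connected by an `N`-chain. -/
noncomputable def cat (a : α) : ℕ∞ :=
  sInf {N : ℕ∞ | ∀ z ∈ Z a, ∀ z' ∈ Z a,
    Chain a (fun x y => (d x y : ℕ∞) ≤ N) z z'}

/-- The equal catenary degree of an element: the smallest `N ∈ ℕ∞` such that any two
factorizations of `a` of the same length are connected by an equal-length `N`-chain. -/
noncomputable def ceq (a : α) : ℕ∞ :=
  sInf {N : ℕ∞ | ∀ z ∈ Z a, ∀ z' ∈ Z a, Multiset.card z = Multiset.card z' →
    Chain a (fun x y => (d x y : ℕ∞) ≤ N ∧ Multiset.card x = Multiset.card y) z z'}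

/-- The monotone catenary degree of an element: the smallest `N ∈ ℕ∞` such that any two
factorizations of `a` (ordered by length) are connected by a monotone `N`-chain. -/
noncomputable def cmon (a : α) : ℕ∞ :=
  sInf {N : ℕ∞ | ∀ z ∈ Z a, ∀ z' ∈ Z a, Multiset.card z ≤ Multiset.card z' →
    Chain a (fun x y => (d x y : ℕ∞) ≤ N ∧ Multiset.card x ≤ Multiset.card y) z z'}

/-- The adjacent catenary degree of an element:
`c_adj(a) = sup{d(Z_k(a), Z_l(a)) : k, l ∈ L(a) adjacent}`. -/
noncomputable def cadj (a : α) : ℕ∞ :=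
  sSup {r : ℕ∞ | ∃ k l : ℕ, Adjacent a k l ∧ r = (dS (Zk a k) (Zk a l) : ℕ∞)}

noncomputable def catH (α : Type*) [CancelCommMonoid α] : ℕ∞ := ⨆ a : α, cat a
noncomputable def ceqH (α : Type*) [CancelCommMonoid α] : ℕ∞ := ⨆ a : α, ceq a
noncomputable def cmonH (α : Type*) [CancelCommMonoid α] : ℕ∞ := ⨆ a : α, cmon a
noncomputable def cadjH (α : Type*) [CancelCommMonoid α] : ℕ∞ := ⨆ a : α, cadj a

/-- `gcd(x, y) ≠ 1`: the two factorizations share an atom. -/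
def RStep (x y : Fac α) : Prop := ∃ u, u ∈ x ∧ u ∈ y

/-- `z ≈ z'`: there is an `R`-chain concatenating `z` and `z'` in `Z a`. -/
def RRel (a : α) (z z' : Fac α) : Prop := Chain a RStep z z'

/-- `z ≈_eq z'`: there is an equal-length `R`-chain concatenating `z` and `z'` in `Z a`. -/
def RRelEq (a : α) (z z' : Fac α) : Prop :=
  Chain a (fun x y => RStep x y ∧ Multiset.card x = Multiset.card y) z z'

/-- There is a monotone `R`-chain from `z` to `z'` in `Z a`. -/
def MonRChain (a : α) (z z' : Fac α) : Prop :=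
  Chain a (fun x y => RStep x y ∧ Multiset.card x ≤ Multiset.card y) z z'

/-- `μ(a)`: the supremum, over the `R`-classes `ρ` of `Z a`, of the minimal length of
an element of `ρ`. -/
noncomputable def mu (a : α) : ℕ∞ :=
  sSup {r : ℕ∞ | ∃ z ∈ Z a,
    r = ((sInf {n : ℕ | ∃ z', RRel a z z' ∧ Multiset.card z' = n} : ℕ) : ℕ∞)}

noncomputable def muH (α : Type*) [CancelCommMonoid α] : ℕ∞ := ⨆ a : α, mu a

/-- `μ_eq(a) = sup{k ∈ L(a) : Z_k(a) has more than one ≈_eq-class}`. -/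
noncomputable def mueq (a : α) : ℕ∞ :=
  sSup {r : ℕ∞ | ∃ k ∈ L a,
    (∃ z ∈ Zk a k, ∃ z' ∈ Zk a k, ¬ RRelEq a z z') ∧ r = (k : ℕ∞)}

noncomputable def mueqH (α : Type*) [CancelCommMonoid α] : ℕ∞ := ⨆ a : α, mueq a

/-- `μ_adj(a) = sup{k ∈ L(a) : d(Z_k(a), Z_l(a)) = k for the l ∈ L(a), l < k adjacent to k}`. -/
noncomputable def muadj (a : α) : ℕ∞ :=
  sSup {r : ℕ∞ | ∃ k ∈ L a,
    (∃ l : ℕ, Adjacent a l k ∧ dS (Zk a k) (Zk a l) = k) ∧ r = (k : ℕ∞)}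

noncomputable def muadjH (α : Type*) [CancelCommMonoid α] : ℕ∞ := ⨆ a : α, muadj a

/-- The monoid of relations of `H`, as a subset of `Z(H) × Z(H)`. -/
def relMon (α : Type*) [CancelCommMonoid α] : Set (Fac α × Fac α) :=
  {p | piF p.1 = piF p.2}

/-- The monoid of equal-length relations of `H`. -/
def relMonEq (α : Type*) [CancelCommMonoid α] : Set (Fac α × Fac α) :=
  {p | piF p.1 = piF p.2 ∧ Multiset.card p.1 = Multiset.card p.2}

/-- The monoid of monotone relations of `H`. -/
def relMonMon (α : Type*) [CancelCommMonoid α] : Set (Fac α × Fac α) :=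
  {p | piF p.1 = piF p.2 ∧ Multiset.card p.1 ≤ Multiset.card p.2}

/-- `p` is an atom (irreducible element) of the reduced submonoid `S` of `Z(H) × Z(H)`. -/
def IsAtomIn (S : Set (Fac α × Fac α)) (p : Fac α × Fac α) : Prop :=
  p ∈ S ∧ p ≠ 0 ∧ ∀ q ∈ S, ∀ r ∈ S, p = q + r → q = 0 ∨ r = 0

/-- `A_a(S) = A(S) ∩ (Z(a) × Z(a))`. -/
def AtomsAt (S : Set (Fac α × Fac α)) (a : α) : Set (Fac α × Fac α) :=
  {p | IsAtomIn S p ∧ p.1 ∈ Z a ∧ p.2 ∈ Z a}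

/-- The tame degree `t(a, x)`. -/
noncomputable def tdeg (a : α) (x : Fac α) : ℕ∞ :=
  sInf {N : ℕ∞ | ∀ z ∈ Z a, (∃ w ∈ Z a, x ≤ w) →
    ∃ z' ∈ Z a, x ≤ z' ∧ (d z z' : ℕ∞) ≤ N}

/-- The tame degree `t(H) = sup{t(a, u) : a ∈ H, u ∈ A(H)}`. -/
noncomputable def tH (α : Type*) [CancelCommMonoid α] : ℕ∞ :=
  ⨆ (a : α) (u : {u : α // Irreducible u}), tdeg a {u}

/-- The `m`-adjacent catenary degree of an element:
`c_{ad,m}(a) = sup{d(Z_k(a), Z_{[k-m,k)}(a)) : k ∈ L(a)}`. -/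
noncomputable def cadm (m : ℕ) (a : α) : ℕ∞ :=
  sSup {r : ℕ∞ | ∃ k ∈ L a, r = (dS (Zk a k) (ZM a (Set.Ico (k - m) k)) : ℕ∞)}

noncomputable def cadmH (α : Type*) [CancelCommMonoid α] (m : ℕ) : ℕ∞ := ⨆ a : α, cadm m a

/-- `μ_{ad,m}(a) = sup{k ∈ L(a) : d(Z_k(a), Z_{[k-m,k)}(a)) = k}`. -/
noncomputable def muadm (m : ℕ) (a : α) : ℕ∞ :=
  sSup {r : ℕ∞ | ∃ k ∈ L a, dS (Zk a k) (ZM a (Set.Ico (k - m) k)) = k ∧ r = (k : ℕ∞)}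

noncomputable def muadmH (α : Type*) [CancelCommMonoid α] (m : ℕ) : ℕ∞ := ⨆ a : α, muadm m a

/-- `H` is reduced: the only unit is `1`. -/
def Reduced (α : Type*) [CancelCommMonoid α] : Prop := ∀ a : α, IsUnit a → a = 1

/-- `H` is atomic: every element is a product of atoms. -/
def Atomic (α : Type*) [CancelCommMonoid α] : Prop := ∀ a : α, ∃ z : Fac α, piF z = a

/-- The ascending chain condition on principal ideals. -/
def ACCP (α : Type*) [CancelCommMonoid α] : Prop :=
  ∀ f : ℕ → α, (∀ n, f (n + 1) ∣ f n) → ∃ N, ∀ n, N ≤ n → f N ∣ f n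

/-!
Upper bound. Two factorizations `x, y` of the same length `k` are joined by an equal-length chain,
by strong induction on `k`: if `x ≈_eq y`, each step of the `R`-chain cancels a common atom and
reduces to a shorter length; otherwise `(x, y)` is an atom of `∼_{H,eq}` and
`d(x, y) ≤ k ≤ μ_eq(a)`. Likewise, for adjacent lengths `l < k`, either some `x ∈ Z_l(a)` and
`y ∈ Z_k(a)` share an atom (cancel it and recurse), or none do; then every such `(x, y)` is an atom
of `∼_{H,mon}` at distance `k`, so `d(Z_k(a), Z_l(a)) = k ≤ μ_adj(a)`. Climbing through adjacent
lengths gives monotone chains.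

Lower bound. A monotone `N`-chain with `N < k` between two factorizations of length `k` is itself
an equal-length `R`-chain, and a monotone chain from `Z_l(a)` to `Z_k(a)`, for adjacent `l < k`,
contains a step from `Z_l(a)` to `Z_k(a)`, of distance at least `d(Z_k(a), Z_l(a))`.
-/

open Relation

theorem mem_Z {a : α} {z : Fac α} : z ∈ Z a ↔ piF z = a := Iff.rfl

theorem piF_zero : piF (0 : Fac α) = 1 := by
  simp [piF]

theorem piF_cons (u : {u : α // Irreducible u}) (z : Fac α) :
    piF (u ::ₘ z) = u.val * piF z := by
  simp [piF]

theorem piF_add (x y : Fac α) : piF (x + y) = piF x * piF y := by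
  simp [piF]

theorem piF_eq_one_iff {z : Fac α} : piF z = 1 ↔ z = 0 := by
  refine ⟨fun h => ?_, fun h => h ▸ piF_zero⟩
  by_contra hz
  obtain ⟨u, hu⟩ := Multiset.exists_mem_of_ne_zero hz
  obtain ⟨w, rfl⟩ := Multiset.exists_cons_of_mem hu
  rw [piF_cons] at h
  exact u.2.not_isUnit (IsUnit.of_mul_eq_one _ h)

theorem ne_zero_of_piF_eq {x y : Fac α} (h : piF x = piF y) (h0 : (x, y) ≠ 0) :
    x ≠ 0 ∧ y ≠ 0 := by
  have hiff : x = 0 ↔ y = 0 := by rw [← piF_eq_one_iff, h, piF_eq_one_iff]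
  exact ⟨fun hx => h0 (Prod.mk_eq_zero.2 ⟨hx, hiff.1 hx⟩),
    fun hy => h0 (Prod.mk_eq_zero.2 ⟨hiff.2 hy, hy⟩)⟩

theorem cons_mem_Z_iff {u : {u : α // Irreducible u}} {b : α} {z : Fac α} :
    u ::ₘ z ∈ Z (u.val * b) ↔ z ∈ Z b := by
  simp only [mem_Z, piF_cons, mul_right_inj]

theorem cons_mem_Zk {u : {u : α // Irreducible u}} {b : α} {k : ℕ} {z : Fac α}
    (hz : z ∈ Zk b k) : u ::ₘ z ∈ Zk (u.val * b) (k + 1) :=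
  ⟨cons_mem_Z_iff.2 hz.1, by rw [Multiset.card_cons, hz.2]⟩

theorem add_mem_Z_of_piF_eq {a : α} {x x' y : Fac α} (hx : piF x = piF x') (h : x + y ∈ Z a) :
    x' + y ∈ Z a := by
  rwa [mem_Z, piF_add, ← hx, ← piF_add]

theorem succ_mem_L_mul {u : {u : α // Irreducible u}} {b : α} {m : ℕ} (hm : m ∈ L b) :
    m + 1 ∈ L (u.val * b) := by
  obtain ⟨z, hz, rfl⟩ := hm
  exact ⟨u ::ₘ z, cons_mem_Z_iff.2 hz, Multiset.card_cons _ _⟩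

theorem Adjacent.of_mul_atom {u : {u : α // Irreducible u}} {b : α} {l k : ℕ}
    (h : Adjacent (u.val * b) (l + 1) (k + 1)) (hl : l ∈ L b) (hk : k ∈ L b) : Adjacent b l k := by
  obtain ⟨-, -, hlk, hbetween⟩ := h
  refine ⟨hl, hk, by omega, fun m hm hlm hmk => ?_⟩
  have := hbetween (m + 1) (succ_mem_L_mul hm) (by omega) (by omega)
  omega

theorem exists_adjacent_le {a : α} {k m : ℕ} (hk : k ∈ L a) (hm : m ∈ L a) (hkm : k < m) :
    ∃ l, Adjacent a k l ∧ l ≤ m := by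
  set T : Set ℕ := {l | l ∈ L a ∧ k < l ∧ l ≤ m}
  obtain ⟨hlL, hkl, hlm⟩ : sInf T ∈ T := Nat.sInf_mem ⟨m, hm, hkm, le_rfl⟩
  refine ⟨sInf T, ⟨hk, hlL, hkl, fun n hn hkn hnl => ?_⟩, hlm⟩
  rcases hkn.eq_or_lt with rfl | hkn
  · exact .inl rfl
  · exact .inr (hnl.antisymm (Nat.sInf_le ⟨hn, hkn, hnl.trans hlm⟩))

theorem rstep_add_left {x y s : Fac α} (hs : s ≠ 0) : RStep (s + x) (s + y) := by
  obtain ⟨u, hu⟩ := Multiset.exists_mem_of_ne_zero hs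
  exact ⟨u, Multiset.mem_add.2 (.inl hu), Multiset.mem_add.2 (.inl hu)⟩

theorem rstep_add_right {x y s : Fac α} (hs : s ≠ 0) : RStep (x + s) (y + s) := by
  rw [add_comm x, add_comm y]
  exact rstep_add_left hs

theorem exists_cons_of_rstep {a : α} {x y : Fac α} (hx : x ∈ Z a) (hy : y ∈ Z a)
    (h : RStep x y) :
    ∃ u x' y', x = u ::ₘ x' ∧ y = u ::ₘ y' ∧ a = u.val * piF x' ∧ y' ∈ Z (piF x') := by
  obtain ⟨u, hux, huy⟩ := h
  obtain ⟨x', rfl⟩ := Multiset.exists_cons_of_mem hux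
  obtain ⟨y', rfl⟩ := Multiset.exists_cons_of_mem huy
  rw [mem_Z, piF_cons] at hx
  subst hx
  exact ⟨u, x', y', rfl, rfl, rfl, cons_mem_Z_iff.1 hy⟩

theorem d_eq [DecidableEq {u : α // Irreducible u}] (x y : Fac α) :
    d x y = max (Multiset.card (x - y)) (Multiset.card (y - x)) := by
  unfold d
  congr <;> apply Subsingleton.elim

theorem d_comm (x y : Fac α) : d x y = d y x :=
  max_comm _ _

theorem d_cons (u : {u : α // Irreducible u}) (x y : Fac α) :
    d (u ::ₘ x) (u ::ₘ y) = d x y := by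
  classical
  simp only [d_eq, ← Multiset.singleton_add, add_tsub_add_eq_tsub_left]

theorem d_le_max (x y : Fac α) : d x y ≤ max (Multiset.card x) (Multiset.card y) :=
  by
  classical
  rw [d_eq]
  exact max_le_max (Multiset.card_le_card tsub_le_self) (Multiset.card_le_card tsub_le_self)

theorem d_eq_max_of_not_rstep {x y : Fac α} (h : ¬ RStep x y) :
    d x y = max (Multiset.card x) (Multiset.card y) := by
  classical
  have hdisj : Disjoint x y := Multiset.disjoint_left.2 fun hx hy => h ⟨_, hx, hy⟩
  rw [d_eq, ← Multiset.sub_inter x y, ← Multiset.sub_inter y x,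
    Multiset.inter_eq_zero_iff_disjoint.2 hdisj, Multiset.inter_eq_zero_iff_disjoint.2 hdisj.symm,
    tsub_zero, tsub_zero]

theorem rstep_of_d_lt {x y : Fac α} (h : d x y < Multiset.card x) : RStep x y := by
  by_contra hxy
  rw [d_eq_max_of_not_rstep hxy] at h
  exact (le_max_left _ _).not_gt h

theorem dS_le {X Y : Set (Fac α)} {x y : Fac α} (hx : x ∈ X) (hy : y ∈ Y) : dS X Y ≤ d x y :=
  Nat.sInf_le ⟨x, hx, y, hy, rfl⟩

theorem dS_eq_of_forall {X Y : Set (Fac α)} {x y : Fac α} {n : ℕ} (hx : x ∈ X) (hy : y ∈ Y)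
    (h : ∀ x ∈ X, ∀ y ∈ Y, d x y = n) : dS X Y = n :=
  (h x hx y hy ▸ dS_le hx hy).antisymm
    (le_csInf ⟨_, x, hx, y, hy, rfl⟩ fun _ ⟨x, hx, y, hy, hxy⟩ => hxy ▸ (h x hx y hy).ge)

theorem _root_.Fin.exists_castSucc_ne_succ {β : Type*} {n : ℕ} {f : Fin (n + 1) → β}
    (h : f 0 ≠ f (Fin.last n)) : ∃ i : Fin n, f i.castSucc ≠ f i.succ := by
  by_contra! hf
  exact h (Fin.induction (motive := fun j => f 0 = f j) rfl (fun i hi => hi.trans (hf i)) _)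

namespace Chain

variable {a b : α} {P Q : Fac α → Fac α → Prop} {x y z : Fac α}

theorem mem_left (h : Chain a P x y) : x ∈ Z a := by
  obtain ⟨n, c, rfl, -, hc, -⟩ := h
  exact hc 0

theorem mem_right (h : Chain a P x y) : y ∈ Z a := by
  obtain ⟨n, c, -, rfl, hc, -⟩ := h
  exact hc _

theorem iff_reflTransGen :
    Chain a P x y ↔ x ∈ Z a ∧ ReflTransGen (fun p q => P p q ∧ q ∈ Z a) x y := by
  constructor
  · intro h
    refine ⟨h.mem_left, ?_⟩
    obtain ⟨n, c, rfl, rfl, hc, hstep⟩ := h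
    exact Fin.induction (motive := fun j => ReflTransGen _ (c 0) (c j)) .refl
      (fun i hi => hi.tail ⟨hstep i, hc _⟩) _
  · rintro ⟨hx, h⟩
    induction h with
    | refl => exact ⟨0, fun _ => x, rfl, rfl, fun _ => hx, Fin.elim0⟩
    | tail _ hstep ih =>
      obtain ⟨n, c, h0, hl, hc, hs⟩ := ih
      refine ⟨n + 1, Fin.snoc c _, by rw [← Fin.castSucc_zero, Fin.snoc_castSucc, h0],
        Fin.snoc_last _ _, Fin.lastCases ?_ fun i => ?_, Fin.lastCases ?_ fun i => ?_⟩
      · rw [Fin.snoc_last]; exact hstep.2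
      · rw [Fin.snoc_castSucc]; exact hc i
      · rw [Fin.succ_last, Fin.snoc_last, Fin.snoc_castSucc, hl]; exact hstep.1
      · rw [Fin.succ_castSucc, Fin.snoc_castSucc, Fin.snoc_castSucc]; exact hs i

theorem refl (hx : x ∈ Z a) : Chain a P x x :=
  iff_reflTransGen.2 ⟨hx, .refl⟩

theorem single (hx : x ∈ Z a) (hy : y ∈ Z a) (h : P x y) : Chain a P x y :=
  iff_reflTransGen.2 ⟨hx, .single ⟨h, hy⟩⟩

theorem trans (h₁ : Chain a P x y) (h₂ : Chain a P y z) : Chain a P x z :=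
  iff_reflTransGen.2 ⟨h₁.mem_left, (iff_reflTransGen.1 h₁).2.trans (iff_reflTransGen.1 h₂).2⟩

theorem mono (h : Chain a P x y) (hPQ : ∀ p q, P p q → Q p q) : Chain a Q x y := by
  obtain ⟨n, c, h0, hl, hc, hs⟩ := h
  exact ⟨n, c, h0, hl, hc, fun i => hPQ _ _ (hs i)⟩

theorem cons (h : Chain b P x y) (u : {u : α // Irreducible u})
    (hPQ : ∀ p q, P p q → Q (u ::ₘ p) (u ::ₘ q)) : Chain (u.val * b) Q (u ::ₘ x) (u ::ₘ y) := by
  obtain ⟨n, c, rfl, rfl, hc, hs⟩ := h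
  exact ⟨n, fun i => u ::ₘ c i, rfl, rfl, fun i => cons_mem_Z_iff.2 (hc i), fun i => hPQ _ _ (hs i)⟩

theorem card_eq (h : Chain a P x y) (hP : ∀ p q, P p q → Multiset.card p = Multiset.card q) :
    Multiset.card x = Multiset.card y := by
  obtain ⟨-, hr⟩ := iff_reflTransGen.1 h
  clear h
  induction hr with
  | refl => rfl
  | tail _ hstep ih => exact ih.trans (hP _ _ hstep.1)

theorem bind (h : Chain a Q x y)
    (hQ : ∀ p q, Chain a Q x p → Q p q → q ∈ Z a → Chain a P p q) : Chain a P x y := by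
  obtain ⟨hx, hr⟩ := iff_reflTransGen.1 h
  clear h
  induction hr with
  | refl => exact refl hx
  | tail hxp hstep ih => exact ih.trans (hQ _ _ (iff_reflTransGen.2 ⟨hx, hxp⟩) hstep.1 hstep.2)

end Chain

theorem isAtomIn_relMonEq_of_not_rrelEq {a : α} {x y : Fac α} (hx : x ∈ Z a) (hy : y ∈ Z a)
    (hxy : Multiset.card x = Multiset.card y) (hne : ¬ RRelEq a x y) :
    IsAtomIn (relMonEq α) (x, y) := by
  refine ⟨⟨hx.trans hy.symm, hxy⟩, fun h0 => hne ?_, ?_⟩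
  · obtain ⟨rfl, rfl⟩ := Prod.mk_eq_zero.1 h0
    exact .refl hx
  rintro ⟨q₁, q₂⟩ ⟨hq, hq_card⟩ ⟨r₁, r₂⟩ ⟨hr, hr_card⟩ hqr
  simp only [Prod.mk_add_mk, Prod.mk.injEq] at hqr
  obtain ⟨rfl, rfl⟩ := hqr
  by_contra! h0
  -- `q₁ + r₁ → q₂ + r₁ → q₂ + r₂` is an equal-length `R`-chain
  have hw : q₂ + r₁ ∈ Z a := add_mem_Z_of_piF_eq hq hx
  refine hne ((Chain.single hx hw ⟨rstep_add_right (ne_zero_of_piF_eq hr h0.2).1, ?_⟩).trans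
    (Chain.single hw hy ⟨rstep_add_left (ne_zero_of_piF_eq hq h0.1).2, ?_⟩)) <;>
    simp only [Multiset.card_add, hq_card, hr_card]

theorem isAtomIn_relMonMon_of_adjacent {a : α} {l k : ℕ} (hadj : Adjacent a l k)
    (hdisj : ∀ x ∈ Zk a l, ∀ y ∈ Zk a k, ¬ RStep x y) {x y : Fac α} (hx : x ∈ Zk a l)
    (hy : y ∈ Zk a k) : IsAtomIn (relMonMon α) (x, y) := by
  obtain ⟨-, -, hlk, hbetween⟩ := hadj
  refine ⟨⟨hx.1.trans hy.1.symm, by rw [hx.2, hy.2]; exact hlk.le⟩, fun h0 => ?_, ?_⟩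
  · obtain ⟨-, rfl⟩ := Prod.mk_eq_zero.1 h0
    have := hy.2
    simp only [Multiset.card_zero] at this
    omega
  rintro ⟨q₁, q₂⟩ ⟨hq, hq_card⟩ ⟨r₁, r₂⟩ ⟨hr, hr_card⟩ hqr
  simp only [Prod.mk_add_mk, Prod.mk.injEq] at hqr
  obtain ⟨rfl, rfl⟩ := hqr
  dsimp only at hq hq_card hr hr_card
  by_contra! h0
  -- the length of `q₂ + r₁` lies between those of `q₁ + r₁` and `q₂ + r₂`
  have hw : q₂ + r₁ ∈ Z a := add_mem_Z_of_piF_eq hq hx.1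
  obtain ⟨hxZ, hx_card⟩ := hx
  obtain ⟨hyZ, hy_card⟩ := hy
  simp only [Multiset.card_add] at hx_card hy_card
  rcases hbetween _ ⟨_, hw, rfl⟩ (by simp only [Multiset.card_add]; omega)
      (by simp only [Multiset.card_add]; omega) with hwl | hwk
  · exact hdisj _ ⟨hw, hwl⟩ _ ⟨hyZ, by simp only [Multiset.card_add]; omega⟩
      (rstep_add_left (ne_zero_of_piF_eq hq h0.1).2)
  · exact hdisj _ ⟨hxZ, by simp only [Multiset.card_add]; omega⟩ _ ⟨hw, hwk⟩
      (rstep_add_right (ne_zero_of_piF_eq hr h0.2).1)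

theorem le_mueq_of_not_rrelEq {a : α} {k : ℕ} {x y : Fac α} (hx : x ∈ Zk a k) (hy : y ∈ Zk a k)
    (h : ¬ RRelEq a x y) : (k : ℕ∞) ≤ mueq a :=
  le_sSup ⟨k, ⟨x, hx.1, hx.2⟩, ⟨x, hx, y, hy, h⟩, rfl⟩

theorem le_muadj_of_adjacent {a : α} {l k : ℕ} (hadj : Adjacent a l k)
    (hdisj : ∀ x ∈ Zk a l, ∀ y ∈ Zk a k, ¬ RStep x y) : (k : ℕ∞) ≤ muadj a := by
  obtain ⟨⟨x, hx, rfl⟩, ⟨y, hy, rfl⟩, hlk, -⟩ := id hadj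
  refine le_sSup ⟨_, ⟨y, hy, rfl⟩, ⟨_, hadj, dS_eq_of_forall ⟨hy, rfl⟩ ⟨hx, rfl⟩ ?_⟩, rfl⟩
  intro p hp q hq
  rw [d_comm, d_eq_max_of_not_rstep (hdisj q hq p hp), hp.2, hq.2, max_eq_right hlk.le]

section UpperBound

variable {S : ℕ∞}

theorem chain_eq_length_of_forall
    (hS : ∀ (a : α) (k : ℕ), ∀ x ∈ Zk a k, ∀ y ∈ Zk a k, ¬ RRelEq a x y → (k : ℕ∞) ≤ S)
    (k : ℕ) (a : α) {x y : Fac α} (hx : x ∈ Zk a k) (hy : y ∈ Zk a k) :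
    Chain a (fun p q => (d p q : ℕ∞) ≤ S ∧ Multiset.card p = Multiset.card q) x y := by
  induction k using Nat.strong_induction_on generalizing a x y with
  | _ k ih =>
  by_cases hxy : RRelEq a x y
  · refine hxy.bind fun p q hxp hpq hq => ?_
    have hp_card : Multiset.card p = k := ((hxp.card_eq fun _ _ h => h.2).symm.trans hx.2)
    obtain ⟨u, p, q, rfl, rfl, rfl, hq'⟩ := exists_cons_of_rstep hxp.mem_right hq hpq.1
    simp only [Multiset.card_cons] at hp_card hpq
    exact (ih _ (by omega) _ ⟨rfl, rfl⟩ ⟨hq', by omega⟩).cons u fun _ _ h =>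
      ⟨by rw [d_cons]; exact h.1, by simp only [Multiset.card_cons, h.2]⟩
  · refine .single hx.1 hy.1 ⟨le_trans ?_ (hS a k x hx y hy hxy), hx.2.trans hy.2.symm⟩
    have := d_le_max x y
    rw [hx.2, hy.2, max_self] at this
    exact_mod_cast this

theorem exists_d_le_of_adjacent
    (hS : ∀ (a : α) (l k : ℕ), Adjacent a l k →
      (∀ x ∈ Zk a l, ∀ y ∈ Zk a k, ¬ RStep x y) → (k : ℕ∞) ≤ S)
    (k : ℕ) (a : α) {l : ℕ} (hadj : Adjacent a l k) :
    ∃ x ∈ Zk a l, ∃ y ∈ Zk a k, (d x y : ℕ∞) ≤ S := by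
  induction k using Nat.strong_induction_on generalizing a l with
  | _ k ih =>
  by_cases hc : ∃ x ∈ Zk a l, ∃ y ∈ Zk a k, RStep x y
  · obtain ⟨x, ⟨hx, rfl⟩, y, ⟨hy, rfl⟩, hxy⟩ := hc
    obtain ⟨u, x, y, rfl, rfl, rfl, hyx⟩ := exists_cons_of_rstep hx hy hxy
    simp only [Multiset.card_cons] at hadj ih ⊢
    obtain ⟨x', hx', y', hy', hd⟩ :=
      ih _ (by omega) _ (hadj.of_mul_atom ⟨x, rfl, rfl⟩ ⟨y, hyx, rfl⟩)
    exact ⟨u ::ₘ x', cons_mem_Zk hx', u ::ₘ y', cons_mem_Zk hy', by rwa [d_cons]⟩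
  · push Not at hc
    obtain ⟨⟨x, hx, rfl⟩, ⟨y, hy, rfl⟩, hlt, -⟩ := id hadj
    refine ⟨x, ⟨hx, rfl⟩, y, ⟨hy, rfl⟩, ?_⟩
    rw [d_eq_max_of_not_rstep (hc x ⟨hx, rfl⟩ y ⟨hy, rfl⟩), max_eq_right hlt.le]
    exact hS a _ _ hadj hc

theorem cmon_le_of_forall
    (hS_eq : ∀ (a : α) (k : ℕ), ∀ x ∈ Zk a k, ∀ y ∈ Zk a k, ¬ RRelEq a x y → (k : ℕ∞) ≤ S)
    (hS_adj : ∀ (a : α) (l k : ℕ), Adjacent a l k →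
      (∀ x ∈ Zk a l, ∀ y ∈ Zk a k, ¬ RStep x y) → (k : ℕ∞) ≤ S)
    (a : α) : cmon a ≤ S := by
  have h_eq : ∀ x ∈ Z a, ∀ y ∈ Z a, Multiset.card x = Multiset.card y →
      Chain a (fun p q => (d p q : ℕ∞) ≤ S ∧ Multiset.card p ≤ Multiset.card q) x y :=
    fun x hx y hy hxy => (chain_eq_length_of_forall hS_eq _ a ⟨hx, rfl⟩ ⟨hy, hxy.symm⟩).mono
      fun _ _ h => ⟨h.1, h.2.le⟩
  refine sInf_le fun z hz z' hz' hle => ?_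
  induction hgap : Multiset.card z' - Multiset.card z using Nat.strong_induction_on
    generalizing z with
  | _ n ih =>
  rcases hle.eq_or_lt with heq | hlt
  · exact h_eq z hz z' hz' heq
  obtain ⟨l, hadj, hlm⟩ := exists_adjacent_le ⟨z, hz, rfl⟩ ⟨z', hz', rfl⟩ hlt
  obtain ⟨x, hx, y, hy, hxy⟩ := exists_d_le_of_adjacent hS_adj l a hadj
  have hstep := Chain.single
    (P := fun p q => (d p q : ℕ∞) ≤ S ∧ Multiset.card p ≤ Multiset.card q) hx.1 hy.1
    ⟨hxy, by rw [hx.2, hy.2]; exact hadj.2.2.1.le⟩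
  exact ((h_eq z hz x hx.1 hx.2.symm).trans hstep).trans
    (ih _ (by have := hadj.2.2.1; have := hy.2; omega) y hy.1 (hy.2 ▸ hlm) rfl)

end UpperBound

theorem mueq_le_cmon (a : α) : mueq a ≤ cmon a := by
  refine sSup_le ?_
  rintro _ ⟨k, -, ⟨z, hz, z', hz', hzz'⟩, rfl⟩
  refine le_sInf fun N hN => not_lt.1 fun hNk => hzz' ?_
  obtain ⟨n, c, rfl, rfl, hc, hstep⟩ := hN _ hz.1 _ hz'.1 (hz.2.trans hz'.2.symm).le
  have hmono : Monotone (Multiset.card ∘ c) := Fin.monotone_iff_le_succ.2 fun i => (hstep i).2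
  have hcard : ∀ i, Multiset.card (c i) = k := fun i =>
    le_antisymm (hz'.2 ▸ hmono (Fin.le_last i)) (hz.2 ▸ hmono (Fin.zero_le i))
  refine ⟨n, c, rfl, rfl, hc, fun i => ⟨rstep_of_d_lt ?_, (hcard _).trans (hcard _).symm⟩⟩
  rw [hcard]
  exact_mod_cast (hstep i).1.trans_lt hNk

theorem muadj_le_cmon (a : α) : muadj a ≤ cmon a := by
  refine sSup_le ?_
  rintro _ ⟨k, -, ⟨l, hadj, hdS⟩, rfl⟩
  obtain ⟨⟨z, hz, rfl⟩, ⟨z', hz', rfl⟩, hlt, hbetween⟩ := hadj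
  refine le_sInf fun N hN => ?_
  obtain ⟨n, c, rfl, rfl, hc, hstep⟩ := hN _ hz _ hz' hlt.le
  have hmono : Monotone (Multiset.card ∘ c) := Fin.monotone_iff_le_succ.2 fun i => (hstep i).2
  -- every length along the chain is one of the two adjacent lengths, so some step jumps between them
  have hcard : ∀ i, Multiset.card (c i) = Multiset.card (c 0) ∨
      Multiset.card (c i) = Multiset.card (c (Fin.last n)) := fun i =>
    hbetween _ ⟨c i, hc i, rfl⟩ (hmono (Fin.zero_le i)) (hmono (Fin.le_last i))
  obtain ⟨i, hi⟩ := Fin.exists_castSucc_ne_succ (f := Multiset.card ∘ c) hlt.ne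
  have hi_lt : Multiset.card (c i.castSucc) < Multiset.card (c i.succ) :=
    ((hstep i).2).lt_of_ne hi
  have h₁ : Multiset.card (c i.castSucc) = Multiset.card (c 0) := by
    have := hcard i.castSucc; have := hcard i.succ; omega
  have h₂ : Multiset.card (c i.succ) = Multiset.card (c (Fin.last n)) := by
    have := hcard i.castSucc; have := hcard i.succ; omega
  calc ((Multiset.card (c (Fin.last n)) : ℕ) : ℕ∞)
      = dS (Zk a (Multiset.card (c (Fin.last n)))) (Zk a (Multiset.card (c 0))) := by rw [hdS]
    _ ≤ d (c i.succ) (c i.castSucc) := Nat.cast_le.2 (dS_le ⟨hc _, h₂⟩ ⟨hc _, h₁⟩)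
    _ ≤ N := d_comm (c i.succ) _ ▸ (hstep i).1

theorem stmt8_general {α : Type*} [CancelCommMonoid α] :
    cmonH α = sSup
      ({r : ℕ∞ | ∃ a : α, (AtomsAt (relMonEq α) a).Nonempty ∧
          (∃ k ∈ L a, ∃ z ∈ Zk a k, ∃ z' ∈ Zk a k, ¬ RRelEq a z z') ∧ r = mueq a} ∪
       {r : ℕ∞ | ∃ a : α, (AtomsAt (relMonMon α) a).Nonempty ∧ r = muadj a}) := by
  refine le_antisymm (iSup_le (cmon_le_of_forall ?_ ?_)) (sSup_le ?_)
  · intro a k x hx y hy hxy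
    have hatom := isAtomIn_relMonEq_of_not_rrelEq hx.1 hy.1 (hx.2.trans hy.2.symm) hxy
    exact (le_mueq_of_not_rrelEq hx hy hxy).trans <| le_sSup <|
      .inl ⟨a, ⟨_, hatom, hx.1, hy.1⟩, ⟨k, ⟨x, hx.1, hx.2⟩, x, hx, y, hy, hxy⟩, rfl⟩
  · intro a l k hadj hdisj
    obtain ⟨⟨x, hx, rfl⟩, ⟨y, hy, rfl⟩, -, -⟩ := id hadj
    have hatom := isAtomIn_relMonMon_of_adjacent hadj hdisj ⟨hx, rfl⟩ ⟨hy, rfl⟩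
    exact (le_muadj_of_adjacent hadj hdisj).trans <| le_sSup <| .inr ⟨a, ⟨_, hatom, hx, hy⟩, rfl⟩
  · rintro r (⟨a, -, -, rfl⟩ | ⟨a, -, rfl⟩)
    · exact (mueq_le_cmon a).trans (le_iSup cmon a)
    · exact (muadj_le_cmon a).trans (le_iSup cmon a)

/-- Let `H` be a reduced, commutative, cancellative, atomic monoid. Then
`c_mon(H) = sup({μ_eq(a) : a ∈ H, A_a(∼_{H,eq}) ≠ ∅, |R_{a,k}| > 1 for some k ∈ L(a)}`
`              ∪ {μ_adj(a) : a ∈ H, A_a(∼_{H,mon}) ≠ ∅})`. -/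
theorem stmt8 {α : Type*} [CancelCommMonoid α]
    (hred : Reduced α) (hatomic : Atomic α) :
    cmonH α = sSup
      ({r : ℕ∞ | ∃ a : α, (AtomsAt (relMonEq α) a).Nonempty ∧
          (∃ k ∈ L a, ∃ z ∈ Zk a k, ∃ z' ∈ Zk a k, ¬ RRelEq a z z') ∧ r = mueq a} ∪
       {r : ℕ∞ | ∃ a : α, (AtomsAt (relMonMon α) a).Nonempty ∧ r = muadj a}) :=
  stmt8_general

end CMR
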